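/- Fix t > 0 and define, for λ ∈ ℂ \ {0}, ϑ₂₁(λ) = ((ω²−ω)t/2)[(λ − λ^{-1})ξ + (λ + λ^{-1})] with ω = e^{2πi/3} and ξ ∈ ℝ. If ξ ≥ 1, then Re ϑ₂₁(λ) > 0 for all λ with Im λ > 0, and Re ϑ₂₁(λ) < 0 for all λ with Im λ < 0. -/
import Mathlib

open Complex

-- ω² - ω = -√3 i
lemma omega_sq_sub (ω : ℂ) (hω : ω = Complex.exp (2 * Real.pi * Complex.I / 3)) :
    ω ^ 2 - ω = -(Real.sqrt 3 : ℂ) * Complex.I := by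
  have h2 : ω ^ 2 = Complex.exp (4 * Real.pi * Complex.I / 3) := by
    rw [hω, sq, ← Complex.exp_add]; ring_nf
  have hc1 : Real.cos (2 * Real.pi / 3) = -(1/2) := by
    have : (2 : ℝ) * Real.pi / 3 = Real.pi - Real.pi / 3 := by ring
    rw [this, Real.cos_pi_sub, Real.cos_pi_div_three]
  have hs1 : Real.sin (2 * Real.pi / 3) = Real.sqrt 3 / 2 := by
    have : (2 : ℝ) * Real.pi / 3 = Real.pi - Real.pi / 3 := by ring
    rw [this, Real.sin_pi_sub, Real.sin_pi_div_three]
  have hc2 : Real.cos (4 * Real.pi / 3) = -(1/2) := by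
    have h : (4 : ℝ) * Real.pi / 3 = Real.pi + Real.pi / 3 := by ring
    rw [h, Real.cos_add, Real.cos_pi_div_three, Real.sin_pi_div_three]
    norm_num
  have hs2 : Real.sin (4 * Real.pi / 3) = -(Real.sqrt 3 / 2) := by
    have h : (4 : ℝ) * Real.pi / 3 = Real.pi + Real.pi / 3 := by ring
    rw [h, Real.sin_add, Real.cos_pi_div_three, Real.sin_pi_div_three]
    norm_num
  apply Complex.ext
  · rw [Complex.sub_re, h2, hω]
    simp [Complex.exp_re]
    norm_num [hc1, hc2]
  · rw [Complex.sub_im, h2, hω]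
    simp [Complex.exp_im]
    norm_num [hs1, hs2]
    ring

theorem tzitzeica_phase_sign_outside_light_cone
    (t : ℝ) (ht : 0 < t)
    (ω : ℂ) (hω : ω = Complex.exp (2 * Real.pi * Complex.I / 3))
    (ξ : ℝ) (hξ : 1 ≤ ξ)
    (ϑ : ℂ → ℂ)
    (hϑ : ∀ z : ℂ, ϑ z =
      ((ω ^ 2 - ω) * (t : ℂ) / 2) * ((z - z⁻¹) * (ξ : ℂ) + (z + z⁻¹))) :
    (∀ z : ℂ, 0 < z.im → 0 < (ϑ z).re) ∧
    (∀ z : ℂ, z.im < 0 → (ϑ z).re < 0) := by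
  have hω2 := omega_sq_sub ω hω
  have key : ∀ z : ℂ, z ≠ 0 → (ϑ z).re =
      Real.sqrt 3 * t / 2 *
        (z.im * ((1 + (Complex.normSq z)⁻¹) * ξ + (1 - (Complex.normSq z)⁻¹))) := by
    intro z hz
    have hn : Complex.normSq z ≠ 0 := ne_of_gt (Complex.normSq_pos.mpr hz)
    rw [hϑ, hω2]
    simp [Complex.mul_re, Complex.mul_im, Complex.inv_re, Complex.inv_im,
      Complex.div_re, Complex.div_im, Complex.normSq]
    field_simp
    ring
  have hfac : ∀ z : ℂ, z ≠ 0 → 0 < (1 + (Complex.normSq z)⁻¹) * ξ + (1 - (Complex.normSq z)⁻¹) := by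
    intro z hz
    have hn : 0 < Complex.normSq z := Complex.normSq_pos.mpr hz
    have hi : 0 < (Complex.normSq z)⁻¹ := inv_pos.mpr hn
    nlinarith
  have hs3 : 0 < Real.sqrt 3 := Real.sqrt_pos.mpr (by norm_num)
  constructor
  · intro z hzim
    have hz : z ≠ 0 := fun h => by simp [h] at hzim
    rw [key z hz]
    have := hfac z hz
    positivity
  · intro z hzim
    have hz : z ≠ 0 := fun h => by simp [h] at hzim
    rw [key z hz]
    have := hfac z hz
    have h1 : 0 < Real.sqrt 3 * t / 2 := by positivity
    exact mul_neg_of_pos_of_neg h1 (mul_neg_of_neg_of_pos hzim this)
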